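/- For m ≥ 3, 2 ≤ k ≤ m, and δ ≥ 0 there exists a constant C > 0, independent of the gluing parameter a with 0 < |a| < 1/2, such that ⦀q·p⦀_{k,−δ} ≤ C·e^{δR/2}·⦀q⦀_{m,−δ}·⦀p⦀_{k,−δ} for all q ∈ H^m(Z_a,ℝ) and p ∈ H^k(Z_a,ℝ), where R = φ(|a|). -/

import Mathlib

open Filter MeasureTheory

noncomputable section

/-- square of the weighted Sobolev norm `⦀q⦀²_{k,−δ}` on the finite glued cylinder
`Z_a ≅ [0,R] × S¹` (functions on `ℝ²`, 1-periodic in the second variable), with weight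
`e^{−2δ|s − R/2|}` -/
def zNormSq (k : ℕ) (δ R : ℝ) (q : ℝ × ℝ → ℝ) : ℝ :=
  ∑ j ∈ Finset.range (k + 1),
    ∫ x in Set.Ioo (0 : ℝ) R ×ˢ Set.Ioo (0 : ℝ) 1,
      ‖iteratedFDeriv ℝ j q x‖ ^ 2 * Real.exp (-2 * δ * |x.1 - R / 2|)

/-- membership in `H^k(Z_a)` (smooth representatives with finite weighted integrals) -/
def memZ (k : ℕ) (δ R : ℝ) (q : ℝ × ℝ → ℝ) : Prop :=
  ContDiff ℝ (k : ℕ∞) q ∧ (∀ s t : ℝ, q (s, t + 1) = q (s, t)) ∧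
    ∀ j ≤ k, IntegrableOn
      (fun x => ‖iteratedFDeriv ℝ j q x‖ ^ 2 * Real.exp (-2 * δ * |x.1 - R / 2|))
      (Set.Ioo (0 : ℝ) R ×ˢ Set.Ioo (0 : ℝ) 1)

/-!
Integrating the fundamental theorem of calculus along both coordinate directions bounds `‖v x‖`
by the `L¹` norms of `v`, `Dv` and `D²v` over any unit square containing `x`, and Jensen's
inequality turns these into `L²` norms. For `R ≥ 1` every point of `(0,R) × (0,1)` lies in a
unit square inside it, on which the weight `e^{-2δ|s - R/2|}` varies by at most `e^{2δ}`; hence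
`‖Dⁱu(x)‖ ≤ 4 e^δ e^{δ|s - R/2|} ⦀u⦀_{i+2,-δ}`. In the Leibniz expansion of `Dⁿ(qp)` one of the
two factors carries at most `m - 2`, resp. `k - 2`, derivatives (this is where `m ≥ 3` enters),
so it can be estimated pointwise, and the leftover weight `e^{2δ|s - R/2|} ≤ e^{δR}` produces
the factor `e^{δR/2}`.
-/

open Set

theorem Continuous.integrableOn_Ioo_prod_Ioo {F : Type*} [NormedAddCommGroup F]
    {f : ℝ × ℝ → F} (hf : Continuous f) (a b c d : ℝ) : IntegrableOn f (Ioo a b ×ˢ Ioo c d) :=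
  (hf.continuousOn.integrableOn_compact (isCompact_Icc.prod isCompact_Icc)).mono_set
    (prod_mono Ioo_subset_Icc_self Ioo_subset_Icc_self)

section Sobolev

variable {F G : Type*} [NormedAddCommGroup F] [NormedSpace ℝ F] [CompleteSpace F]
  [NormedAddCommGroup G] [NormedSpace ℝ G]

theorem norm_le_setIntegral_Ioo_of_hasDerivAt {f f' : ℝ → F} {g : ℝ → ℝ}
    (hf : ∀ τ, HasDerivAt f (f' τ) τ) (hf' : Continuous f') (hg : Continuous g)
    (hf'g : ∀ τ, ‖f' τ‖ ≤ g τ) {c s : ℝ} (hs : s ∈ Icc c (c + 1)) :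
    ‖f s‖ ≤ ∫ τ in Ioo c (c + 1), (‖f τ‖ + g τ) := by
  have hgI : IntegrableOn g (Icc c (c + 1)) := hg.integrableOn_Icc
  have osc : ∀ τ ∈ Ioo c (c + 1), ‖f s‖ ≤ ‖f τ‖ + ∫ σ in Ioo c (c + 1), g σ := by
    intro τ hτ
    have hsub : uIoc τ s ⊆ Icc c (c + 1) :=
      Ioc_subset_Icc_self.trans (Icc_subset_Icc (le_min hτ.1.le hs.1) (max_le hτ.2.le hs.2))
    calc ‖f s‖ ≤ ‖f τ‖ + ‖f s - f τ‖ := norm_le_insert' _ _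
      _ = ‖f τ‖ + ‖∫ σ in uIoc τ s, f' σ‖ := by
        rw [← intervalIntegral.norm_integral_eq_norm_integral_uIoc,
          intervalIntegral.integral_eq_sub_of_hasDerivAt (fun σ _ => hf σ)
            (hf'.intervalIntegrable _ _)]
      _ ≤ ‖f τ‖ + ∫ σ in uIoc τ s, g σ := by
        gcongr
        exact norm_integral_le_of_norm_le (hgI.mono_set hsub) (ae_of_all _ hf'g)
      _ ≤ ‖f τ‖ + ∫ σ in Ioo c (c + 1), g σ := by
        rw [← integral_Icc_eq_integral_Ioo]
        gcongr
        exact ae_of_all _ fun σ => (norm_nonneg _).trans (hf'g σ)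
  have hfI : IntegrableOn (fun τ => ‖f τ‖) (Ioo c (c + 1)) :=
    (continuous_iff_continuousAt.2 fun τ => (hf τ).continuousAt).norm.integrableOn_Icc.mono_set
      Ioo_subset_Icc_self
  calc ‖f s‖ = ∫ _ in Ioo c (c + 1), ‖f s‖ := by simp
    _ ≤ ∫ τ in Ioo c (c + 1), (‖f τ‖ + ∫ σ in Ioo c (c + 1), g σ) :=
      setIntegral_mono_on (by simp) (hfI.add (by simp)) measurableSet_Ioo osc
    _ = ∫ τ in Ioo c (c + 1), (‖f τ‖ + g τ) := by
      rw [integral_add hfI (by simp), integral_add hfI (hgI.mono_set Ioo_subset_Icc_self)]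
      simp

theorem norm_le_setIntegral_line {w : G → F} (hw : ContDiff ℝ 1 w) (x e : G) (he : ‖e‖ ≤ 1)
    {c s : ℝ} (hs : s ∈ Icc c (c + 1)) :
    ‖w (x + s • e)‖ ≤ ∫ τ in Ioo c (c + 1), (‖w (x + τ • e)‖ + ‖fderiv ℝ w (x + τ • e)‖) := by
  have hDw : Continuous fun τ : ℝ => fderiv ℝ w (x + τ • e) :=
    (hw.continuous_fderiv one_ne_zero).comp (by fun_prop)
  refine norm_le_setIntegral_Ioo_of_hasDerivAt (f := fun τ => w (x + τ • e))
    (f' := fun τ => fderiv ℝ w (x + τ • e) e) (fun τ => ?_) (by fun_prop) hDw.norm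
    (fun τ => (ContinuousLinearMap.le_opNorm _ _).trans
      (mul_le_of_le_one_right (norm_nonneg _) he)) hs
  have hline : HasDerivAt (fun τ : ℝ => x + τ • e) e τ := by
    simpa using ((hasDerivAt_id τ).smul_const e).const_add x
  exact ((hw.differentiable one_ne_zero) _).hasFDerivAt.comp_hasDerivAt τ hline

theorem norm_iteratedFDeriv_le_setIntegral_square {u : ℝ × ℝ → F} {i : ℕ}
    (hu : ContDiff ℝ (i + 2 : ℕ) u) {c d : ℝ} {x : ℝ × ℝ}
    (hx : x ∈ Icc c (c + 1) ×ˢ Icc d (d + 1)) :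
    ‖iteratedFDeriv ℝ i u x‖ ≤ ∫ y in Ioo c (c + 1) ×ˢ Ioo d (d + 1),
      (‖iteratedFDeriv ℝ i u y‖ + 2 * ‖iteratedFDeriv ℝ (i + 1) u y‖
        + ‖iteratedFDeriv ℝ (i + 2) u y‖) := by
  have hC1 : ∀ j ≤ i + 1, ContDiff ℝ 1 (iteratedFDeriv ℝ j u) := fun j hj =>
    hu.iteratedFDeriv_right (by exact_mod_cast (by omega : 1 + j ≤ i + 2))
  have hcont : ∀ j ≤ i + 2, Continuous fun y => ‖iteratedFDeriv ℝ j u y‖ := fun j hj =>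
    (hu.continuous_iteratedFDeriv (by exact_mod_cast hj)).norm
  have slice : ∀ j ≤ i + 1, ∀ t, ‖iteratedFDeriv ℝ j u (x.1, t)‖ ≤ ∫ σ in Ioo c (c + 1),
      (‖iteratedFDeriv ℝ j u (σ, t)‖ + ‖iteratedFDeriv ℝ (j + 1) u (σ, t)‖) := by
    intro j hj t
    simpa [norm_fderiv_iteratedFDeriv] using
      norm_le_setIntegral_line (hC1 j hj) ((0 : ℝ), t) ((1 : ℝ), (0 : ℝ)) (by simp) hx.1
  have outer : ‖iteratedFDeriv ℝ i u x‖ ≤ ∫ t in Ioo d (d + 1),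
      (‖iteratedFDeriv ℝ i u (x.1, t)‖ + ‖iteratedFDeriv ℝ (i + 1) u (x.1, t)‖) := by
    simpa [norm_fderiv_iteratedFDeriv] using
      norm_le_setIntegral_line (hC1 i (by omega)) (x.1, (0 : ℝ)) ((0 : ℝ), (1 : ℝ)) (by simp) hx.2
  set Φ : ℝ × ℝ → ℝ := fun y => ‖iteratedFDeriv ℝ i u y‖ + 2 * ‖iteratedFDeriv ℝ (i + 1) u y‖
    + ‖iteratedFDeriv ℝ (i + 2) u y‖
  have hΦ : Integrable Φ
      ((volume.restrict (Ioo c (c + 1))).prod (volume.restrict (Ioo d (d + 1)))) := by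
    rw [Measure.prod_restrict, ← Measure.volume_eq_prod]
    exact (((hcont i (by omega)).add (continuous_const.mul (hcont (i + 1) (by omega)))).add
      (hcont (i + 2) le_rfl)).integrableOn_Ioo_prod_Ioo _ _ _ _
  calc ‖iteratedFDeriv ℝ i u x‖ ≤ _ := outer
    _ ≤ ∫ t in Ioo d (d + 1), ∫ σ in Ioo c (c + 1), Φ (σ, t) := by
      refine integral_mono_of_nonneg (ae_of_all _ fun t => by positivity) hΦ.integral_prod_right
        (ae_of_all _ fun t => ?_)
      refine (add_le_add (slice i (by omega) t) (slice (i + 1) le_rfl t)).trans_eq ?_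
      rw [← integral_add]
      · exact integral_congr_ae (ae_of_all _ fun σ => by simp only [Φ]; ring)
      all_goals refine (Continuous.integrableOn_Icc ?_).mono_set Ioo_subset_Icc_self
      all_goals exact ((hcont _ (by omega)).add (hcont _ (by omega))).comp (by fun_prop)
    _ = ∫ y in Ioo c (c + 1) ×ˢ Ioo d (d + 1), Φ y := by
      rw [← integral_prod_symm Φ hΦ, Measure.prod_restrict, Measure.volume_eq_prod]

end Sobolev

theorem sq_norm_iteratedFDeriv_mul_le {G 𝔸 : Type*} [NormedAddCommGroup G] [NormedSpace ℝ G]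
    [NormedRing 𝔸] [NormedAlgebra ℝ 𝔸] {q p : G → 𝔸} {N : WithTop ℕ∞} (hq : ContDiff ℝ N q)
    (hp : ContDiff ℝ N p) {n : ℕ} (hn : n ≤ N) (x : G) :
    ‖iteratedFDeriv ℝ n (fun y => q y * p y) x‖ ^ 2 ≤
      2 ^ n * ∑ i ∈ Finset.range (n + 1), (n.choose i : ℝ) *
        (‖iteratedFDeriv ℝ i q x‖ * ‖iteratedFDeriv ℝ (n - i) p x‖) ^ 2 := by
  have hchoose : ∑ i ∈ Finset.range (n + 1), (n.choose i : ℝ) = 2 ^ n := by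
    exact_mod_cast Nat.sum_range_choose n
  calc ‖iteratedFDeriv ℝ n (fun y => q y * p y) x‖ ^ 2
      ≤ (∑ i ∈ Finset.range (n + 1), (n.choose i : ℝ) * ‖iteratedFDeriv ℝ i q x‖ *
          ‖iteratedFDeriv ℝ (n - i) p x‖) ^ 2 :=
        pow_le_pow_left₀ (norm_nonneg _) (norm_iteratedFDeriv_mul_le hq hp x hn) 2
    _ ≤ (∑ i ∈ Finset.range (n + 1), (n.choose i : ℝ)) * ∑ i ∈ Finset.range (n + 1),
          (n.choose i : ℝ) * (‖iteratedFDeriv ℝ i q x‖ * ‖iteratedFDeriv ℝ (n - i) p x‖) ^ 2 :=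
        Finset.sum_sq_le_sum_mul_sum_of_sq_le_mul _ (fun _ _ => by positivity)
          (fun _ _ => by positivity) fun _ _ => le_of_eq (by ring)
    _ = _ := by rw [hchoose]

def cylinderDomain (R : ℝ) : Set (ℝ × ℝ) := Ioo 0 R ×ˢ Ioo 0 1

def cylWeight (δ R : ℝ) (x : ℝ × ℝ) : ℝ := Real.exp (-2 * δ * |x.1 - R / 2|)

def weightedSq (δ R : ℝ) (f : ℝ × ℝ → ℝ) : ℝ :=
  ∫ x in cylinderDomain R, f x ^ 2 * cylWeight δ R x

section Cylinder

variable {δ R : ℝ}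

theorem zNormSq_eq_sum_weightedSq (k : ℕ) (q : ℝ × ℝ → ℝ) :
    zNormSq k δ R q =
      ∑ j ∈ Finset.range (k + 1), weightedSq δ R fun x => ‖iteratedFDeriv ℝ j q x‖ :=
  rfl

theorem continuous_cylWeight : Continuous (cylWeight δ R) := by
  unfold cylWeight; fun_prop

theorem cylWeight_pos (x : ℝ × ℝ) : 0 < cylWeight δ R x := Real.exp_pos _

theorem Continuous.integrableOn_cylinderDomain {f : ℝ × ℝ → ℝ} (hf : Continuous f) :
    IntegrableOn f (cylinderDomain R) :=
  hf.integrableOn_Ioo_prod_Ioo _ _ _ _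

theorem weightedSq_nonneg (f : ℝ × ℝ → ℝ) : 0 ≤ weightedSq δ R f :=
  setIntegral_nonneg (measurableSet_Ioo.prod measurableSet_Ioo) fun x _ =>
    mul_nonneg (sq_nonneg _) (cylWeight_pos x).le

theorem zNormSq_nonneg (k : ℕ) (q : ℝ × ℝ → ℝ) : 0 ≤ zNormSq k δ R q :=
  Finset.sum_nonneg fun _ _ => weightedSq_nonneg _

theorem weightedSq_le_zNormSq {k j : ℕ} (hj : j ≤ k) (q : ℝ × ℝ → ℝ) :
    (weightedSq δ R fun x => ‖iteratedFDeriv ℝ j q x‖) ≤ zNormSq k δ R q := by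
  rw [zNormSq_eq_sum_weightedSq]
  exact Finset.single_le_sum (f := fun j => weightedSq δ R fun x => ‖iteratedFDeriv ℝ j q x‖)
    (fun _ _ => weightedSq_nonneg _) (Finset.mem_range_succ_iff.2 hj)

theorem sq_exp_mul_cylWeight (x : ℝ × ℝ) :
    Real.exp (δ * |x.1 - R / 2|) ^ 2 * cylWeight δ R x = 1 := by
  rw [cylWeight, ← Real.exp_nat_mul, ← Real.exp_add]
  simp only [Nat.cast_ofNat]
  ring_nf
  exact Real.exp_zero

theorem one_le_exp_mul_cylWeight (hδ : 0 ≤ δ) {x : ℝ × ℝ} (hx : x ∈ cylinderDomain R) :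
    1 ≤ Real.exp (δ * R) * cylWeight δ R x := by
  rw [cylWeight, ← Real.exp_add, Real.one_le_exp_iff]
  have : |x.1 - R / 2| ≤ R / 2 := abs_le.2 ⟨by linarith [hx.1.1], by linarith [hx.1.2]⟩
  nlinarith

theorem one_le_sq_mul_cylWeight_of_abs_sub_le_one (hδ : 0 ≤ δ) {x y : ℝ × ℝ}
    (hxy : |y.1 - x.1| ≤ 1) :
    1 ≤ (Real.exp δ * Real.exp (δ * |x.1 - R / 2|)) ^ 2 * cylWeight δ R y := by
  rw [cylWeight, ← Real.exp_add, ← Real.exp_nat_mul, ← Real.exp_add, Real.one_le_exp_iff]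
  have : |y.1 - R / 2| ≤ |x.1 - R / 2| + 1 := by
    calc |y.1 - R / 2| ≤ |y.1 - x.1| + |x.1 - R / 2| := abs_sub_le _ _ _
      _ ≤ _ := by linarith
  push_cast
  nlinarith

end Cylinder

section SupBound

variable {δ R : ℝ} {M : ℕ} {u : ℝ × ℝ → ℝ}

theorem setIntegral_unitSquare_le_sqrt_zNormSq (hδ : 0 ≤ δ) (hu : ContDiff ℝ M u) {j : ℕ}
    (hj : j ≤ M) {c : ℝ} (hQ : Ioo c (c + 1) ×ˢ Ioo 0 1 ⊆ cylinderDomain R) {x : ℝ × ℝ}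
    (hx : x.1 ∈ Icc c (c + 1)) :
    ∫ y in Ioo c (c + 1) ×ˢ Ioo 0 1, ‖iteratedFDeriv ℝ j u y‖ ≤
      Real.exp δ * Real.exp (δ * |x.1 - R / 2|) * Real.sqrt (zNormSq M δ R u) := by
  set Q := Ioo c (c + 1) ×ˢ Ioo (0 : ℝ) 1
  set A := Real.exp δ * Real.exp (δ * |x.1 - R / 2|)
  have ha : Continuous fun y => ‖iteratedFDeriv ℝ j u y‖ :=
    (hu.continuous_iteratedFDeriv (by exact_mod_cast hj)).norm
  have : IsProbabilityMeasure (volume.restrict Q) :=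
    ⟨by simp [Q, Measure.volume_eq_prod, Measure.prod_prod]⟩
  have jensen : (∫ y in Q, ‖iteratedFDeriv ℝ j u y‖) ^ 2 ≤
      ∫ y in Q, ‖iteratedFDeriv ℝ j u y‖ ^ 2 :=
    (even_two.convexOn_pow).map_integral_le (continuous_pow 2).continuousOn isClosed_univ
      (ae_of_all _ fun _ => mem_univ _) (ha.integrableOn_Ioo_prod_Ioo _ _ _ _)
      ((ha.pow 2).integrableOn_Ioo_prod_Ioo _ _ _ _)
  have compare : ∫ y in Q, ‖iteratedFDeriv ℝ j u y‖ ^ 2 ≤ A ^ 2 * zNormSq M δ R u := by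
    have hw : Continuous fun y => ‖iteratedFDeriv ℝ j u y‖ ^ 2 * cylWeight δ R y :=
      (ha.pow 2).mul continuous_cylWeight
    calc ∫ y in Q, ‖iteratedFDeriv ℝ j u y‖ ^ 2
        ≤ ∫ y in Q, A ^ 2 * (‖iteratedFDeriv ℝ j u y‖ ^ 2 * cylWeight δ R y) := by
          refine setIntegral_mono_on ((ha.pow 2).integrableOn_Ioo_prod_Ioo _ _ _ _)
            ((hw.integrableOn_Ioo_prod_Ioo _ _ _ _).const_mul _)
            (measurableSet_Ioo.prod measurableSet_Ioo) fun y hy => ?_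
          have hxy : |y.1 - x.1| ≤ 1 := abs_sub_le_iff.2
            ⟨by linarith [hy.1.2, hx.1], by linarith [hy.1.1, hx.2]⟩
          nlinarith [one_le_sq_mul_cylWeight_of_abs_sub_le_one (R := R) hδ hxy,
            sq_nonneg ‖iteratedFDeriv ℝ j u y‖]
      _ = A ^ 2 * ∫ y in Q, ‖iteratedFDeriv ℝ j u y‖ ^ 2 * cylWeight δ R y :=
          integral_const_mul _ _
      _ ≤ A ^ 2 * weightedSq δ R fun y => ‖iteratedFDeriv ℝ j u y‖ := by
          gcongr
          exact setIntegral_mono_set hw.integrableOn_cylinderDomain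
            (ae_of_all _ fun y => mul_nonneg (sq_nonneg _) (cylWeight_pos y).le) hQ.eventuallyLE
      _ ≤ A ^ 2 * zNormSq M δ R u := by gcongr; exact weightedSq_le_zNormSq hj u
  calc ∫ y in Q, ‖iteratedFDeriv ℝ j u y‖
      ≤ Real.sqrt (A ^ 2 * zNormSq M δ R u) :=
        (le_abs_self _).trans (Real.abs_le_sqrt (jensen.trans compare))
    _ = A * Real.sqrt (zNormSq M δ R u) := by
        rw [Real.sqrt_mul (sq_nonneg _), Real.sqrt_sq (by positivity)]

theorem norm_iteratedFDeriv_le_of_mem_cylinderDomain (hδ : 0 ≤ δ) (hR : 1 ≤ R)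
    (hu : ContDiff ℝ M u) {i : ℕ} (hi : i + 2 ≤ M) {x : ℝ × ℝ} (hx : x ∈ cylinderDomain R) :
    ‖iteratedFDeriv ℝ i u x‖ ≤
      4 * Real.exp δ * Real.sqrt (zNormSq M δ R u) * Real.exp (δ * |x.1 - R / 2|) := by
  set c := min x.1 (R - 1)
  have hQ : Ioo c (c + 1) ×ˢ Ioo 0 1 ⊆ cylinderDomain R :=
    prod_mono (Ioo_subset_Ioo (le_min hx.1.1.le (by linarith))
      (by linarith [min_le_right x.1 (R - 1)])) subset_rfl
  have hxc : x.1 ∈ Icc c (c + 1) := ⟨min_le_left _ _, by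
    rcases min_choice x.1 (R - 1) with h | h <;> simp only [c, h] <;> linarith [hx.1.2]⟩
  have hsquare := norm_iteratedFDeriv_le_setIntegral_square (d := 0)
    (hu.of_le (by exact_mod_cast hi)) (x := x) ⟨hxc, by simpa using Ioo_subset_Icc_self hx.2⟩
  rw [zero_add] at hsquare
  have hint : ∀ j ≤ M,
      IntegrableOn (fun y => ‖iteratedFDeriv ℝ j u y‖) (Ioo c (c + 1) ×ˢ Ioo 0 1) := fun j hj =>
    (hu.continuous_iteratedFDeriv (by exact_mod_cast hj)).norm.integrableOn_Ioo_prod_Ioo _ _ _ _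
  have bound := fun j (hj : j ≤ M) => setIntegral_unitSquare_le_sqrt_zNormSq hδ hu hj hQ hxc
  refine hsquare.trans ?_
  rw [integral_add (f := fun y => ‖iteratedFDeriv ℝ i u y‖ + 2 * ‖iteratedFDeriv ℝ (i + 1) u y‖)
    ((hint i (by omega)).add ((hint (i + 1) (by omega)).const_mul 2)) (hint (i + 2) hi),
    integral_add (hint i (by omega)) ((hint (i + 1) (by omega)).const_mul 2), integral_const_mul]
  linarith [bound i (by omega), bound (i + 1) (by omega), bound (i + 2) hi]

end SupBound

section Product

variable {δ R : ℝ} {m k : ℕ} {q p : ℝ × ℝ → ℝ}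

theorem weightedSq_mul_le (hδ : 0 ≤ δ) {f g : ℝ × ℝ → ℝ} (hf : Continuous f) (hg : Continuous g)
    {A : ℝ} (hfA : ∀ x ∈ cylinderDomain R, |f x| ≤ A * Real.exp (δ * |x.1 - R / 2|)) :
    (weightedSq δ R fun x => f x * g x) ≤ A ^ 2 * Real.exp (δ * R) * weightedSq δ R g := by
  rw [weightedSq, weightedSq, ← integral_const_mul]
  refine setIntegral_mono_on
    (((hf.mul hg).pow 2).mul continuous_cylWeight).integrableOn_cylinderDomain
    (((hg.pow 2).mul continuous_cylWeight).integrableOn_cylinderDomain.const_mul _)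
    (measurableSet_Ioo.prod measurableSet_Ioo) fun x hx => ?_
  have hw := (cylWeight_pos (δ := δ) (R := R) x).le
  calc (f x * g x) ^ 2 * cylWeight δ R x = |f x| ^ 2 * (g x ^ 2 * cylWeight δ R x) := by
        rw [sq_abs]; ring
    _ ≤ (A * Real.exp (δ * |x.1 - R / 2|)) ^ 2 * (g x ^ 2 * cylWeight δ R x) := by
        gcongr; exact hfA x hx
    _ = A ^ 2 * g x ^ 2 * (Real.exp (δ * |x.1 - R / 2|) ^ 2 * cylWeight δ R x) := by ring
    _ ≤ A ^ 2 * g x ^ 2 * (Real.exp (δ * R) * cylWeight δ R x) := by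
        rw [sq_exp_mul_cylWeight]; gcongr; exact one_le_exp_mul_cylWeight hδ hx
    _ = A ^ 2 * Real.exp (δ * R) * (g x ^ 2 * cylWeight δ R x) := by ring

theorem weightedSq_norm_mul_norm_iteratedFDeriv_le (hδ : 0 ≤ δ) (hR : 1 ≤ R) (hm : 3 ≤ m)
    (hkm : k ≤ m) (hq : ContDiff ℝ m q) (hp : ContDiff ℝ k p) {n i : ℕ} (hn : n ≤ k)
    (hi : i ≤ n) :
    (weightedSq δ R fun x => ‖iteratedFDeriv ℝ i q x‖ * ‖iteratedFDeriv ℝ (n - i) p x‖) ≤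
      (4 * Real.exp δ) ^ 2 * Real.exp (δ * R) * zNormSq m δ R q * zNormSq k δ R p := by
  have hqc : Continuous fun x => ‖iteratedFDeriv ℝ i q x‖ :=
    (hq.continuous_iteratedFDeriv (by exact_mod_cast (by omega : i ≤ m))).norm
  have hpc : Continuous fun x => ‖iteratedFDeriv ℝ (n - i) p x‖ :=
    (hp.continuous_iteratedFDeriv (by exact_mod_cast (by omega : n - i ≤ k))).norm
  have hNq := Real.sq_sqrt (zNormSq_nonneg (δ := δ) (R := R) m q)
  have hNp := Real.sq_sqrt (zNormSq_nonneg (δ := δ) (R := R) k p)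
  rcases le_or_gt (i + 2) m with hi2 | hi2
  · calc _ ≤ (4 * Real.exp δ * Real.sqrt (zNormSq m δ R q)) ^ 2 * Real.exp (δ * R) *
            weightedSq δ R fun x => ‖iteratedFDeriv ℝ (n - i) p x‖ :=
          weightedSq_mul_le hδ hqc hpc fun x hx => by
            rw [abs_norm]; exact norm_iteratedFDeriv_le_of_mem_cylinderDomain hδ hR hq hi2 hx
      _ ≤ (4 * Real.exp δ * Real.sqrt (zNormSq m δ R q)) ^ 2 * Real.exp (δ * R) *
            zNormSq k δ R p := by gcongr; exact weightedSq_le_zNormSq (by omega) p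
      _ = _ := by rw [mul_pow _ (Real.sqrt _), hNq]; ring
  · have hswap : (fun x => ‖iteratedFDeriv ℝ i q x‖ * ‖iteratedFDeriv ℝ (n - i) p x‖) =
        fun x => ‖iteratedFDeriv ℝ (n - i) p x‖ * ‖iteratedFDeriv ℝ i q x‖ :=
      funext fun _ => mul_comm _ _
    rw [hswap]
    calc _ ≤ (4 * Real.exp δ * Real.sqrt (zNormSq k δ R p)) ^ 2 * Real.exp (δ * R) *
            weightedSq δ R fun x => ‖iteratedFDeriv ℝ i q x‖ :=
          weightedSq_mul_le hδ hpc hqc fun x hx => by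
            rw [abs_norm]
            exact norm_iteratedFDeriv_le_of_mem_cylinderDomain hδ hR hp (by omega) hx
      _ ≤ (4 * Real.exp δ * Real.sqrt (zNormSq k δ R p)) ^ 2 * Real.exp (δ * R) *
            zNormSq m δ R q := by gcongr; exact weightedSq_le_zNormSq (by omega) q
      _ = _ := by rw [mul_pow _ (Real.sqrt _), hNp]; ring

theorem weightedSq_norm_iteratedFDeriv_mul_le_sum {N n : ℕ} (hq : ContDiff ℝ N q)
    (hp : ContDiff ℝ N p) (hn : n ≤ N) :
    (weightedSq δ R fun x => ‖iteratedFDeriv ℝ n (fun y => q y * p y) x‖) ≤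
      2 ^ n * ∑ i ∈ Finset.range (n + 1), (n.choose i : ℝ) *
        weightedSq δ R fun x => ‖iteratedFDeriv ℝ i q x‖ * ‖iteratedFDeriv ℝ (n - i) p x‖ := by
  have hterm : ∀ i ∈ Finset.range (n + 1), Continuous fun x =>
      (‖iteratedFDeriv ℝ i q x‖ * ‖iteratedFDeriv ℝ (n - i) p x‖) ^ 2 * cylWeight δ R x :=
    fun i hi => ((((hq.continuous_iteratedFDeriv (by
      exact_mod_cast (Finset.mem_range_succ_iff.1 hi).trans hn)).norm.mul
      (hp.continuous_iteratedFDeriv (by exact_mod_cast (by omega))).norm)).pow 2).mul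
      continuous_cylWeight
  have hlhs : Continuous fun x =>
      ‖iteratedFDeriv ℝ n (fun y => q y * p y) x‖ ^ 2 * cylWeight δ R x :=
    (((hq.mul hp).continuous_iteratedFDeriv (by exact_mod_cast hn)).norm.pow 2).mul
      continuous_cylWeight
  calc (weightedSq δ R fun x => ‖iteratedFDeriv ℝ n (fun y => q y * p y) x‖)
      ≤ ∫ x in cylinderDomain R, 2 ^ n * ∑ i ∈ Finset.range (n + 1), (n.choose i : ℝ) *
          ((‖iteratedFDeriv ℝ i q x‖ * ‖iteratedFDeriv ℝ (n - i) p x‖) ^ 2 *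
            cylWeight δ R x) := by
        refine setIntegral_mono_on hlhs.integrableOn_cylinderDomain
          ((continuous_const.mul (continuous_finsetSum _ fun i hi =>
            continuous_const.mul (hterm i hi))).integrableOn_cylinderDomain)
          (measurableSet_Ioo.prod measurableSet_Ioo) fun x _ => ?_
        calc _ ≤ (2 ^ n * ∑ i ∈ Finset.range (n + 1), (n.choose i : ℝ) *
              (‖iteratedFDeriv ℝ i q x‖ * ‖iteratedFDeriv ℝ (n - i) p x‖) ^ 2) *
                cylWeight δ R x :=
            mul_le_mul_of_nonneg_right
              (sq_norm_iteratedFDeriv_mul_le hq hp (by exact_mod_cast hn) x) (cylWeight_pos x).le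
          _ = _ := by rw [mul_assoc, Finset.sum_mul]; simp_rw [mul_assoc]
    _ = _ := by
        rw [integral_const_mul, integral_finsetSum _ fun i hi =>
          (hterm i hi).integrableOn_cylinderDomain.const_mul _]
        simp_rw [integral_const_mul, weightedSq]

theorem weightedSq_norm_iteratedFDeriv_mul_le (hδ : 0 ≤ δ) (hR : 1 ≤ R) (hm : 3 ≤ m)
    (hkm : k ≤ m) (hq : ContDiff ℝ m q) (hp : ContDiff ℝ k p) {n : ℕ} (hn : n ≤ k) :
    (weightedSq δ R fun x => ‖iteratedFDeriv ℝ n (fun y => q y * p y) x‖) ≤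
      4 ^ n * ((4 * Real.exp δ) ^ 2 * Real.exp (δ * R) * zNormSq m δ R q * zNormSq k δ R p) := by
  set B := (4 * Real.exp δ) ^ 2 * Real.exp (δ * R) * zNormSq m δ R q * zNormSq k δ R p
  have hchoose : ∑ i ∈ Finset.range (n + 1), (n.choose i : ℝ) = 2 ^ n := by
    exact_mod_cast Nat.sum_range_choose n
  calc _ ≤ _ := weightedSq_norm_iteratedFDeriv_mul_le_sum (hq.of_le (by exact_mod_cast hkm)) hp hn
    _ ≤ 2 ^ n * ∑ i ∈ Finset.range (n + 1), (n.choose i : ℝ) * B := by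
        gcongr with i hi
        exact weightedSq_norm_mul_norm_iteratedFDeriv_le hδ hR hm hkm hq hp hn
          (Finset.mem_range_succ_iff.1 hi)
    _ = 4 ^ n * B := by
        rw [← Finset.sum_mul, hchoose, ← mul_assoc, ← mul_pow]; norm_num

theorem zNormSq_mul_le (hδ : 0 ≤ δ) (hR : 1 ≤ R) (hm : 3 ≤ m) (hkm : k ≤ m)
    (hq : ContDiff ℝ m q) (hp : ContDiff ℝ k p) :
    zNormSq k δ R (fun x => q x * p x) ≤ (k + 1) * 4 ^ k *
      ((4 * Real.exp δ) ^ 2 * Real.exp (δ * R) * zNormSq m δ R q * zNormSq k δ R p) := by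
  have hB : 0 ≤ (4 * Real.exp δ) ^ 2 * Real.exp (δ * R) * zNormSq m δ R q * zNormSq k δ R p :=
    mul_nonneg (mul_nonneg (by positivity) (zNormSq_nonneg m q)) (zNormSq_nonneg k p)
  rw [zNormSq_eq_sum_weightedSq]
  calc _ ≤ ∑ _n ∈ Finset.range (k + 1), 4 ^ k *
        ((4 * Real.exp δ) ^ 2 * Real.exp (δ * R) * zNormSq m δ R q * zNormSq k δ R p) :=
      Finset.sum_le_sum fun n hn => by
        have hnk := Finset.mem_range_succ_iff.1 hn
        refine (weightedSq_norm_iteratedFDeriv_mul_le hδ hR hm hkm hq hp hnk).trans ?_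
        gcongr
        · norm_num
    _ = _ := by rw [Finset.sum_const, Finset.card_range, nsmul_eq_mul]; push_cast; ring

end Product

theorem one_le_exp_one_div_sub_exp_one {r : ℝ} (hr : 0 < r) (hr' : r < 1 / 2) :
    1 ≤ Real.exp (1 / r) - Real.exp 1 := by
  have h2 : Real.exp 2 ≤ Real.exp (1 / r) :=
    Real.exp_le_exp.2 (by rw [le_div_iff₀ hr]; linarith)
  have he : 2 ≤ Real.exp 1 := by linarith [Real.add_one_le_exp 1]
  have hsq : Real.exp 2 = Real.exp 1 * Real.exp 1 := by rw [← Real.exp_add]; norm_num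
  nlinarith

theorem weighted_banach_module_property_on_glued_cylinder_general
    (m k : ℕ) (δ : ℝ) (hm : 3 ≤ m) (hkm : k ≤ m) (hδ : 0 ≤ δ) :
    ∃ C : ℝ, 0 < C ∧
      ∀ a : ℂ, 0 < ‖a‖ → ‖a‖ < 1 / 2 →
      ∀ R : ℝ, R = Real.exp (1 / ‖a‖) - Real.exp 1 →
      ∀ q p : ℝ × ℝ → ℝ, memZ m δ R q → memZ k δ R p →
        Real.sqrt (zNormSq k δ R (fun x => q x * p x))
          ≤ C * Real.exp (δ * R / 2) * Real.sqrt (zNormSq m δ R q) *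
              Real.sqrt (zNormSq k δ R p) := by
  refine ⟨Real.sqrt ((k + 1) * 4 ^ k) * (4 * Real.exp δ), by positivity, ?_⟩
  intro a ha₀ ha R hR q p hq hp
  have hR₁ : 1 ≤ R := hR ▸ one_le_exp_one_div_sub_exp_one ha₀ ha
  have hexp : Real.exp (δ * R / 2) ^ 2 = Real.exp (δ * R) := by
    rw [← Real.exp_nat_mul]; ring_nf
  calc Real.sqrt (zNormSq k δ R (fun x => q x * p x))
      ≤ Real.sqrt ((Real.sqrt ((k + 1) * 4 ^ k) * (4 * Real.exp δ) * Real.exp (δ * R / 2)) ^ 2 *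
          (zNormSq m δ R q * zNormSq k δ R p)) := by
        refine Real.sqrt_le_sqrt ((zNormSq_mul_le hδ hR₁ hm hkm hq.1 hp.1).trans_eq ?_)
        rw [mul_pow, mul_pow, mul_pow, Real.sq_sqrt (by positivity), hexp]
        ring
    _ = _ := by
        rw [Real.sqrt_mul (sq_nonneg _), Real.sqrt_sq (by positivity),
          Real.sqrt_mul (zNormSq_nonneg m q)]
        ring

theorem weighted_banach_module_property_on_glued_cylinder
    (m k : ℕ) (δ : ℝ) (hm : 3 ≤ m) (hk : 2 ≤ k) (hkm : k ≤ m) (hδ : 0 ≤ δ) :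
    ∃ C : ℝ, 0 < C ∧
      ∀ a : ℂ, 0 < ‖a‖ → ‖a‖ < 1 / 2 →
      ∀ R : ℝ, R = Real.exp (1 / ‖a‖) - Real.exp 1 →
      ∀ q p : ℝ × ℝ → ℝ, memZ m δ R q → memZ k δ R p →
        Real.sqrt (zNormSq k δ R (fun x => q x * p x))
          ≤ C * Real.exp (δ * R / 2) * Real.sqrt (zNormSq m δ R q) *
              Real.sqrt (zNormSq k δ R p) :=
  weighted_banach_module_property_on_glued_cylinder_general m k δ hm hkm hδ
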